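/- Consider the mixed-binary set W = {(β, γ, δ) ∈ ℝ^q × ℝ^p × Δ : h_i(β_{i,1}) ≤ γ_i for all i ∈ [p], β_{i,1}(1 − δ_i) = 0 for all i ∈ [p], and C_i β_i ∈ ℂ_i for all i ∈ [p]}. If for every i ∈ [p] there exists δ ∈ Δ with δ_i = 1, then the closed convex hull of W equals {(β, γ, δ) ∈ ℝ^q × ℝ^p × conv(Δ) : h_i^π(β_{i,1}, δ_i) ≤ γ_i for all i ∈ [p], and C_i β_i ∈ ℂ_i for all i ∈ [p]}. -/

import Mathlib

open scoped Classical

/-- The closure `h^π` of the perspective function of `h : ℝ → ℝ ∪ {+∞}`: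
`h^π(x, w) = w·h(x/w)` for `w > 0`, `h^π(x, 0) = lim_{s ↓ 0} s·h(x/s)`, and `+∞` for `w < 0`. -/
noncomputable def perspCl (h : ℝ → EReal) (x w : ℝ) : EReal :=
  if 0 < w then (w : EReal) * h (x / w)
  else if w = 0 then
    Filter.limUnder (nhdsWithin (0 : ℝ) (Set.Ioi 0)) (fun s : ℝ => (s : EReal) * h (x / s))
  else ⊤

/-!
Each `h_i` is the supremum of its affine minorants `y ↦ a y + c`, and `c ≤ 0` since `h_i 0 = 0`.
Hence for `w ≥ 0` the closed perspective `h_i^π (x, w)` is the supremum of the linear forms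
`a x + c w`, also at `w = 0`, where it is a monotone limit. So the right-hand side is closed and
convex, and it contains `W`.

Conversely, if all `δ_i` are positive, the linear map `z ↦ (z_i / δ_i • β_i, z_i / δ_i • γ_i, z)`
sends `δ` to the given point and `Δ` into `W`, so a convex decomposition of `δ ∈ conv Δ` yields one
of the point in `W`. Any other point is a limit of such points: move `δ` slightly towards a point of
`conv Δ` with all `δ_i > 0`, which exists by the hypothesis on `Δ`, and rescale `β_i`, `γ_i`.
-/

open Filter Set Topology

structure IsProperClosedConvex (h : ℝ → EReal) : Prop where
  ne_bot : ∀ x, h x ≠ ⊥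
  exists_ne_top : ∃ x, h x ≠ ⊤
  lowerSemicontinuous : LowerSemicontinuous h
  convex_epigraph : Convex ℝ {u : ℝ × ℝ | h u.2 ≤ u.1}

lemma EReal.coe_mul_iSup {ι : Sort*} {t : ℝ} (ht : 0 < t) (f : ι → EReal) :
    (t : EReal) * ⨆ i, f i = ⨆ i, (t : EReal) * f i :=
  Monotone.map_iSup_of_continuousAt (f := fun y => (t : EReal) * y)
    (EReal.Tendsto.const_mul tendsto_id (Or.inl (EReal.coe_ne_bot t))
      (Or.inl (EReal.coe_ne_top t)))
    (fun _ _ hle => mul_le_mul_of_nonneg_left hle (by exact_mod_cast ht.le))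
    (EReal.coe_mul_bot_of_pos ht)

def affineMinorants (h : ℝ → EReal) : Set (ℝ × ℝ) :=
  {c | ∀ y : ℝ, ((c.1 * y + c.2 : ℝ) : EReal) ≤ h y}

noncomputable def perspSup (h : ℝ → EReal) (x w : ℝ) : EReal :=
  ⨆ c : affineMinorants h, ((c.1.1 * x + c.1.2 * w : ℝ) : EReal)

namespace IsProperClosedConvex

variable {h : ℝ → EReal}

lemma exists_eq_coe (hh : IsProperClosedConvex h) {y : ℝ} (hy : h y ≠ ⊤) :
    ∃ t : ℝ, h y = t :=
  ⟨(h y).toReal, (EReal.coe_toReal hy (hh.ne_bot y)).symm⟩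

lemma exists_separation (hh : IsProperClosedConvex h) {t₀ y₀ : ℝ} (hlt : (t₀ : EReal) < h y₀) :
    ∃ α β u : ℝ, 0 ≤ α ∧ α * t₀ + β * y₀ < u ∧ ∀ y s : ℝ, h y ≤ s → u < α * s + β * y := by
  have hclosed : IsClosed {u : ℝ × ℝ | h u.2 ≤ u.1} :=
    hh.lowerSemicontinuous.isClosed_epigraph.preimage
      (continuous_snd.prodMk (continuous_coe_real_ereal.comp continuous_fst))
  obtain ⟨f, u, hf₀, hf⟩ := geometric_hahn_banach_point_closed hh.convex_epigraph hclosed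
    (show (t₀, y₀) ∉ {u : ℝ × ℝ | h u.2 ≤ u.1} from not_le.2 hlt)
  have hf_apply : ∀ s y : ℝ, f (s, y) = f (1, 0) * s + f (0, 1) * y := fun s y => by
    rw [show ((s, y) : ℝ × ℝ) = s • (1, 0) + y • (0, 1) from Prod.ext (by simp) (by simp),
      map_add, map_smul, map_smul, smul_eq_mul, smul_eq_mul, mul_comm s, mul_comm y]
  have hsep : ∀ y s : ℝ, h y ≤ s → u < f (1, 0) * s + f (0, 1) * y := fun y s hys =>
    hf_apply s y ▸ hf (s, y) hys
  refine ⟨f (1, 0), f (0, 1), u, ?_, hf_apply t₀ y₀ ▸ hf₀, hsep⟩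
  -- the epigraph is unbounded upwards, so the separating functional cannot decrease along it
  by_contra! hα
  obtain ⟨y₁, hy₁⟩ := hh.exists_ne_top
  obtain ⟨t₁, ht₁⟩ := hh.exists_eq_coe hy₁
  have hu₁ := hsep y₁ t₁ ht₁.le
  set m := (f (1, 0) * t₁ + f (0, 1) * y₁ - u) / -f (1, 0)
  have hm : 0 ≤ m := div_nonneg (by linarith) (by linarith)
  have hum : f (1, 0) * (t₁ + m) + f (0, 1) * y₁ = u := by
    simp only [m]
    field_simp [hα.ne]
    ring
  have := hsep y₁ (t₁ + m) (ht₁.le.trans (by exact_mod_cast le_add_of_nonneg_right hm))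
  linarith

lemma mem_affineMinorants_of_separation (hh : IsProperClosedConvex h) {α β u : ℝ} (hα : 0 < α)
    (hsep : ∀ y s : ℝ, h y ≤ s → u < α * s + β * y) : (-β / α, u / α) ∈ affineMinorants h := by
  intro y
  rcases eq_or_ne (h y) ⊤ with hy | hy
  · simp [hy]
  obtain ⟨t, ht⟩ := hh.exists_eq_coe hy
  have := hsep y t ht.le
  rw [ht, EReal.coe_le_coe_iff]
  field_simp
  linarith

lemma affineMinorants_nonempty (hh : IsProperClosedConvex h) : (affineMinorants h).Nonempty := by
  obtain ⟨y₁, hy₁⟩ := hh.exists_ne_top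
  obtain ⟨t₁, ht₁⟩ := hh.exists_eq_coe hy₁
  obtain ⟨α, β, u, -, hlt, hsep⟩ :=
    hh.exists_separation (t₀ := t₁ - 1) (by rw [ht₁]; exact_mod_cast sub_one_lt t₁)
  have hα : 0 < α := by nlinarith [hsep y₁ t₁ ht₁.le]
  exact ⟨_, hh.mem_affineMinorants_of_separation hα hsep⟩

lemma exists_affineMinorant_gt (hh : IsProperClosedConvex h) {t₀ y₀ : ℝ}
    (hlt : (t₀ : EReal) < h y₀) : ∃ c ∈ affineMinorants h, t₀ < c.1 * y₀ + c.2 := by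
  obtain ⟨α, β, u, hα, hlt, hsep⟩ := hh.exists_separation hlt
  obtain ⟨c₀, hc₀⟩ := hh.affineMinorants_nonempty
  -- tilt the separating line by a small multiple `ε` of the minorant `c₀` to make it non-vertical
  set d := t₀ - (c₀.1 * y₀ + c₀.2)
  set ε := (u - (α * t₀ + β * y₀)) / (|d| + 1)
  have hε : 0 < ε := div_pos (by linarith) (by positivity)
  have hεd : ε * d < u - (α * t₀ + β * y₀) := by
    calc ε * d ≤ ε * |d| := mul_le_mul_of_nonneg_left (le_abs_self d) hε.le
      _ < ε * (|d| + 1) := by linarith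
      _ = u - (α * t₀ + β * y₀) := div_mul_cancel₀ _ (by positivity)
  have hsep' : ∀ y s : ℝ, h y ≤ s →
      u + ε * c₀.2 < (α + ε) * s + (β - ε * c₀.1) * y := fun y s hys => by
    have h₁ := hsep y s hys
    have h₂ : c₀.1 * y + c₀.2 ≤ s := by exact_mod_cast (hc₀ y).trans hys
    nlinarith
  refine ⟨_, hh.mem_affineMinorants_of_separation (by positivity) hsep', ?_⟩
  show t₀ < -(β - ε * c₀.1) / (α + ε) * y₀ + (u + ε * c₀.2) / (α + ε)
  rw [div_mul_eq_mul_div, ← add_div, lt_div_iff₀ (by positivity)]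
  nlinarith

lemma iSup_affineMinorants (hh : IsProperClosedConvex h) (y : ℝ) :
    ⨆ c : affineMinorants h, ((c.1.1 * y + c.1.2 : ℝ) : EReal) = h y := by
  refine le_antisymm (iSup_le fun c => c.2 y) (EReal.ge_of_forall_gt_iff_ge.1 fun t ht => ?_)
  obtain ⟨c, hc, hlt⟩ := hh.exists_affineMinorant_gt ht
  exact le_iSup_of_le (⟨c, hc⟩ : affineMinorants h) (by exact_mod_cast hlt.le)

end IsProperClosedConvex

def perspEpigraph (h : ℝ → EReal) : Set (ℝ × ℝ × ℝ) := {u | perspCl h u.1 u.2.1 ≤ u.2.2}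

section Perspective

variable {h : ℝ → EReal}

lemma snd_nonpos_of_mem_affineMinorants (h0 : h 0 = 0) {c : ℝ × ℝ}
    (hc : c ∈ affineMinorants h) : c.2 ≤ 0 := by
  simpa [h0] using hc 0

lemma perspSup_antitone (h0 : h 0 = 0) (x : ℝ) : Antitone (perspSup h x) := fun _ _ hw =>
  iSup_mono fun c => EReal.coe_le_coe_iff.2 <| by
    nlinarith [snd_nonpos_of_mem_affineMinorants h0 c.2]

lemma lowerSemicontinuous_perspSup (x : ℝ) : LowerSemicontinuous (perspSup h x) :=
  lowerSemicontinuous_iSup fun _ =>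
    (continuous_coe_real_ereal.comp (by fun_prop)).lowerSemicontinuous

lemma perspCl_eq_perspSup_of_pos (hh : IsProperClosedConvex h) (x : ℝ) {w : ℝ} (hw : 0 < w) :
    perspCl h x w = perspSup h x w := by
  rw [perspCl, if_pos hw, ← hh.iSup_affineMinorants, EReal.coe_mul_iSup hw, perspSup]
  refine iSup_congr fun c => ?_
  rw [← EReal.coe_mul]
  congr 1
  field_simp

lemma perspCl_zero_eq_perspSup (hh : IsProperClosedConvex h) (h0 : h 0 = 0) (x : ℝ) :
    perspCl h x 0 = perspSup h x 0 := by
  rw [perspCl, if_neg (lt_irrefl 0), if_pos rfl]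
  -- lower semicontinuity bounds the limit from below, monotonicity from above
  have hlim : Tendsto (perspSup h x) (𝓝[>] 0) (𝓝 (perspSup h x 0)) :=
    tendsto_order.2 ⟨fun a ha => nhdsWithin_le_nhds (lowerSemicontinuous_perspSup x 0 a ha),
      fun a ha => eventually_nhdsWithin_of_forall fun s hs =>
        (perspSup_antitone h0 x (le_of_lt hs)).trans_lt ha⟩
  refine hlim.congr' (eventually_nhdsWithin_of_forall fun s hs => ?_) |>.limUnder_eq
  rw [← perspCl_eq_perspSup_of_pos hh x hs, perspCl, if_pos (mem_Ioi.1 hs)]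

lemma perspCl_eq_perspSup (hh : IsProperClosedConvex h) (h0 : h 0 = 0) (x : ℝ) {w : ℝ}
    (hw : 0 ≤ w) : perspCl h x w = perspSup h x w := by
  rcases hw.lt_or_eq with hw | rfl
  · exact perspCl_eq_perspSup_of_pos hh x hw
  · exact perspCl_zero_eq_perspSup hh h0 x

lemma perspCl_le_coe_iff (hh : IsProperClosedConvex h) (h0 : h 0 = 0) {x w γ : ℝ} :
    perspCl h x w ≤ γ ↔ 0 ≤ w ∧ ∀ c ∈ affineMinorants h, c.1 * x + c.2 * w ≤ γ := by
  by_cases hw : 0 ≤ w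
  · simp only [perspCl_eq_perspSup hh h0 x hw, perspSup, iSup_le_iff, EReal.coe_le_coe_iff,
      Subtype.forall, hw, true_and]
  · simp [perspCl, hw, (lt_of_not_ge hw).ne, not_lt_of_ge (le_of_not_ge hw)]

lemma perspCl_one (x : ℝ) : perspCl h x 1 = h x := by
  simp [perspCl]

lemma perspCl_zero_zero_le (hh : IsProperClosedConvex h) (h0 : h 0 = 0) {γ : ℝ} (hγ : 0 ≤ γ) :
    perspCl h 0 0 ≤ γ :=
  (perspCl_le_coe_iff hh h0).2 ⟨le_rfl, fun _ _ => by simpa using hγ⟩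

lemma perspCl_mul_le (hh : IsProperClosedConvex h) (h0 : h 0 = 0) {x w w' γ t : ℝ}
    (H : perspCl h x w ≤ γ) (ht : 0 < t) (hw : t * w ≤ w') :
    perspCl h (t * x) w' ≤ (t * γ : ℝ) := by
  rw [perspCl_le_coe_iff hh h0] at H ⊢
  refine ⟨by nlinarith [H.1], fun c hc => ?_⟩
  have := H.2 c hc
  nlinarith [snd_nonpos_of_mem_affineMinorants h0 hc]

lemma le_div_of_perspCl_le {x w γ : ℝ} (hw : 0 < w) (H : perspCl h x w ≤ γ) :
    h (x / w) ≤ (γ / w : ℝ) := by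
  rw [perspCl, if_pos hw] at H
  rw [EReal.coe_div, EReal.le_div_iff_mul_le (by exact_mod_cast hw) (EReal.coe_ne_top w),
    mul_comm]
  exact H

lemma convex_perspEpigraph (hh : IsProperClosedConvex h) (h0 : h 0 = 0) :
    Convex ℝ (perspEpigraph h) := by
  intro u hu v hv a b ha hb hab
  simp only [perspEpigraph, mem_ofPred_eq, perspCl_le_coe_iff hh h0] at hu hv ⊢
  refine ⟨by simpa using add_nonneg (mul_nonneg ha hu.1) (mul_nonneg hb hv.1), fun c hc => ?_⟩
  have hu' := mul_le_mul_of_nonneg_left (hu.2 c hc) ha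
  have hv' := mul_le_mul_of_nonneg_left (hv.2 c hc) hb
  simp only [Prod.fst_add, Prod.snd_add, Prod.smul_fst, Prod.smul_snd, smul_eq_mul]
  linarith

lemma isClosed_perspEpigraph (hh : IsProperClosedConvex h) (h0 : h 0 = 0) :
    IsClosed (perspEpigraph h) := by
  have : perspEpigraph h = {u | 0 ≤ u.2.1} ∩
      ⋂ c ∈ affineMinorants h, {u | c.1 * u.1 + c.2 * u.2.1 ≤ u.2.2} := by
    ext u
    simp [perspEpigraph, perspCl_le_coe_iff hh h0]
  rw [this]
  exact (isClosed_le (by fun_prop) (by fun_prop)).inter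
    (isClosed_biInter fun c _ => isClosed_le (by fun_prop) (by fun_prop))

end Perspective

lemma exists_forall_pos_mem_convexHull {ι κ : Type*} [Fintype ι] {Δ : Set (κ → ℝ)}
    (hΔ : ∀ δ ∈ Δ, 0 ≤ δ) (hne : (convexHull ℝ Δ).Nonempty) (e : ι → κ)
    (hpos : ∀ i, ∃ δ ∈ Δ, 0 < δ (e i)) : ∃ δ ∈ convexHull ℝ Δ, ∀ i, 0 < δ (e i) := by
  choose d hdΔ hd using hpos
  obtain ⟨δ₀, hδ₀⟩ := hne
  have hnonneg : convexHull ℝ Δ ⊆ Ici 0 := convexHull_min hΔ (convex_Ici 0)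
  -- average `δ₀` with one point of `Δ` for each coordinate `e i`
  set z : Option ι → κ → ℝ := fun o => o.elim δ₀ d
  have hz : ∀ o, z o ∈ convexHull ℝ Δ := fun o => by
    cases o
    exacts [hδ₀, subset_convexHull ℝ Δ (hdΔ _)]
  set c : ℝ := (Fintype.card (Option ι) : ℝ)⁻¹
  have hc : 0 < c := by positivity
  refine ⟨∑ o, c • z o, (convex_convexHull ℝ Δ).sum_mem (fun _ _ => hc.le)
    (by rw [Finset.sum_const, Finset.card_univ, nsmul_eq_mul, mul_inv_cancel₀ (by positivity)])
    (fun o _ => hz o), fun i => ?_⟩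
  calc 0 < c * z (some i) (e i) := mul_pos hc (hd i)
    _ ≤ ∑ o, c * z o (e i) := Finset.single_le_sum (f := fun o => c * z o (e i))
        (fun o _ => mul_nonneg hc.le (hnonneg (hz o) (e i))) (Finset.mem_univ _)
    _ = (∑ o, c • z o) (e i) := by simp

lemma Set.Finite.of_forall_eq_zero_or_one {κ : Type*} [Finite κ] {Δ : Set (κ → ℝ)}
    (hΔ : ∀ δ ∈ Δ, ∀ j, δ j = 0 ∨ δ j = 1) : Δ.Finite :=
  (Set.Finite.pi fun _ => ({0, 1} : Set ℝ).toFinite).subset fun δ hδ j _ => hΔ δ hδ j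

section Rescaling

variable {ι κ : Type*} {E : ι → Type*} [∀ i, AddCommGroup (E i)] [∀ i, Module ℝ (E i)]

noncomputable def perspLift (e : ι → κ) (b : (∀ i, E i) × (ι → ℝ) × (κ → ℝ)) :
    (κ → ℝ) →ₗ[ℝ] (∀ i, E i) × (ι → ℝ) × (κ → ℝ) :=
  (LinearMap.pi fun i => ((b.2.2 (e i))⁻¹ • LinearMap.proj (e i)).smulRight (b.1 i)).prod
    ((LinearMap.pi fun i => ((b.2.2 (e i))⁻¹ • LinearMap.proj (e i)).smulRight (b.2.1 i)).prod
      LinearMap.id)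

lemma perspLift_apply {e : ι → κ} (b : (∀ i, E i) × (ι → ℝ) × (κ → ℝ)) (z : κ → ℝ) :
    perspLift e b z = (fun i => (z (e i) / b.2.2 (e i)) • b.1 i,
      fun i => z (e i) / b.2.2 (e i) * b.2.1 i, z) := by
  refine Prod.ext (funext fun i => ?_) (Prod.ext (funext fun i => ?_) rfl) <;>
    simp [perspLift, div_eq_inv_mul]

lemma perspLift_self {e : ι → κ} {b : (∀ i, E i) × (ι → ℝ) × (κ → ℝ)}
    (hw : ∀ i, b.2.2 (e i) ≠ 0) : perspLift e b b.2.2 = b := by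
  simp [perspLift_apply, div_self (hw _)]

/-- The scaling factor of the `i`-th blocks is the ratio of the new to the old coordinate `e i`;
where `b.2.2 (e i) = 0`, division by zero makes it `1 - ε`. -/
noncomputable def perspShift (e : ι → κ) (b : (∀ i, E i) × (ι → ℝ) × (κ → ℝ)) (δ' : κ → ℝ)
    (ε : ℝ) : (∀ i, E i) × (ι → ℝ) × (κ → ℝ) :=
  (fun i => (1 - ε + ε * (δ' (e i) / b.2.2 (e i))) • b.1 i,
    fun i => (1 - ε + ε * (δ' (e i) / b.2.2 (e i))) * b.2.1 i, (1 - ε) • b.2.2 + ε • δ')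

lemma tendsto_perspShift [∀ i, TopologicalSpace (E i)] [∀ i, ContinuousSMul ℝ (E i)]
    (e : ι → κ) (b : (∀ i, E i) × (ι → ℝ) × (κ → ℝ)) (δ' : κ → ℝ) :
    Tendsto (perspShift e b δ') (𝓝 0) (𝓝 b) := by
  have hcont : Continuous (perspShift e b δ') := by
    unfold perspShift
    fun_prop
  simpa [perspShift] using hcont.tendsto 0

end Rescaling

section MixedBinary

variable {ι κ : Type*} {E : ι → Type*} [∀ i, AddCommGroup (E i)] [∀ i, Module ℝ (E i)]
  [∀ i, TopologicalSpace (E i)]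

/-- The set `W`, with `β_{i,1}` read as `ℓ i β_i`, `C_i β_i ∈ ℂ_i` as `β_i ∈ K i`, and `e`
the inclusion `[p] → [n]`. -/
def mixedBinarySet (h : ι → ℝ → EReal) (ℓ : ∀ i, E i →L[ℝ] ℝ) (e : ι → κ)
    (K : ∀ i, Set (E i)) (Δ : Set (κ → ℝ)) : Set ((∀ i, E i) × (ι → ℝ) × (κ → ℝ)) :=
  {b | (∀ i, h i (ℓ i (b.1 i)) ≤ b.2.1 i) ∧ (∀ i, ℓ i (b.1 i) * (1 - b.2.2 (e i)) = 0) ∧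
    (∀ i, b.1 i ∈ K i) ∧ b.2.2 ∈ Δ}

def perspRelaxation (h : ι → ℝ → EReal) (ℓ : ∀ i, E i →L[ℝ] ℝ) (e : ι → κ)
    (K : ∀ i, Set (E i)) (Δ : Set (κ → ℝ)) : Set ((∀ i, E i) × (ι → ℝ) × (κ → ℝ)) :=
  {b | (∀ i, perspCl (h i) (ℓ i (b.1 i)) (b.2.2 (e i)) ≤ b.2.1 i) ∧ (∀ i, b.1 i ∈ K i) ∧
    b.2.2 ∈ convexHull ℝ Δ}

variable {h : ι → ℝ → EReal} {ℓ : ∀ i, E i →L[ℝ] ℝ} {e : ι → κ} {K : ∀ i, Set (E i)}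
  {Δ : Set (κ → ℝ)}

lemma mixedBinarySet_subset_perspRelaxation (hh : ∀ i, IsProperClosedConvex (h i))
    (h0 : ∀ i, h i 0 = 0) (hΔ : ∀ δ ∈ Δ, ∀ j, δ j = 0 ∨ δ j = 1) :
    mixedBinarySet h ℓ e K Δ ⊆ perspRelaxation h ℓ e K Δ := by
  rintro b ⟨hepi, hzero, hK, hΔb⟩
  refine ⟨fun i => ?_, hK, subset_convexHull ℝ Δ hΔb⟩
  rcases hΔ _ hΔb (e i) with hδ | hδ
  · have hx : ℓ i (b.1 i) = 0 := by simpa [hδ] using hzero i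
    have hγ : (0 : EReal) ≤ b.2.1 i := by simpa [hx, h0 i] using hepi i
    rw [hx, hδ]
    exact perspCl_zero_zero_le (hh i) (h0 i) (by exact_mod_cast hγ)
  · rw [hδ, perspCl_one]
    exact hepi i

lemma convex_perspRelaxation (hh : ∀ i, IsProperClosedConvex (h i)) (h0 : ∀ i, h i 0 = 0)
    (hK : ∀ i, Convex ℝ (K i)) : Convex ℝ (perspRelaxation h ℓ e K Δ) := by
  rintro u ⟨hu, huK, huΔ⟩ v ⟨hv, hvK, hvΔ⟩ a b ha hb hab
  refine ⟨fun i => ?_, fun i => hK i (huK i) (hvK i) ha hb hab,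
    convex_convexHull ℝ Δ huΔ hvΔ ha hb hab⟩
  simpa [perspEpigraph] using convex_perspEpigraph (hh i) (h0 i)
    (x := (ℓ i (u.1 i), u.2.2 (e i), u.2.1 i)) (hu i) (y := (ℓ i (v.1 i), v.2.2 (e i), v.2.1 i))
    (hv i) ha hb hab

lemma isClosed_perspRelaxation [Finite κ] (hh : ∀ i, IsProperClosedConvex (h i))
    (h0 : ∀ i, h i 0 = 0) (hK : ∀ i, IsClosed (K i)) (hΔ : ∀ δ ∈ Δ, ∀ j, δ j = 0 ∨ δ j = 1) :
    IsClosed (perspRelaxation h ℓ e K Δ) := by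
  simp only [perspRelaxation, ofPred_and, ofPred_forall]
  refine (isClosed_iInter fun i => ?_).inter ((isClosed_iInter fun i => ?_).inter ?_)
  · exact (isClosed_perspEpigraph (hh i) (h0 i)).preimage
      (f := fun b : (∀ i, E i) × (ι → ℝ) × (κ → ℝ) => (ℓ i (b.1 i), b.2.2 (e i), b.2.1 i))
      (by fun_prop)
  · exact (hK i).preimage (f := fun b : (∀ i, E i) × (ι → ℝ) × (κ → ℝ) => b.1 i) (by fun_prop)
  · exact ((Set.Finite.of_forall_eq_zero_or_one hΔ).isClosed_convexHull ℝ).preimage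
      (f := fun b : (∀ i, E i) × (ι → ℝ) × (κ → ℝ) => b.2.2) (by fun_prop)

lemma perspLift_mem_mixedBinarySet (h0 : ∀ i, h i 0 = 0) (hK0 : ∀ i, 0 ∈ K i)
    (hKcone : ∀ i, ∀ x ∈ K i, ∀ t : ℝ, 0 < t → t • x ∈ K i)
    (hΔ : ∀ δ ∈ Δ, ∀ j, δ j = 0 ∨ δ j = 1) {b : (∀ i, E i) × (ι → ℝ) × (κ → ℝ)}
    (hb : b ∈ perspRelaxation h ℓ e K Δ) (hw : ∀ i, 0 < b.2.2 (e i)) {z : κ → ℝ} (hz : z ∈ Δ) :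
    perspLift e b z ∈ mixedBinarySet h ℓ e K Δ := by
  rw [perspLift_apply]
  refine ⟨fun i => ?_, fun i => ?_, fun i => ?_, hz⟩ <;> rcases hΔ z hz (e i) with hzi | hzi
  · simp [hzi, h0 i]
  · have := le_div_of_perspCl_le (hw i) (hb.1 i)
    simp only [hzi, map_smul, smul_eq_mul, one_div_mul_eq_div]
    exact this
  · simp [hzi]
  · simp [hzi]
  · simpa [hzi] using hK0 i
  · exact hKcone i _ (hb.2.1 i) _ (by simpa [hzi] using hw i)

lemma mem_convexHull_mixedBinarySet_of_pos (h0 : ∀ i, h i 0 = 0) (hK0 : ∀ i, 0 ∈ K i)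
    (hKcone : ∀ i, ∀ x ∈ K i, ∀ t : ℝ, 0 < t → t • x ∈ K i)
    (hΔ : ∀ δ ∈ Δ, ∀ j, δ j = 0 ∨ δ j = 1) {b : (∀ i, E i) × (ι → ℝ) × (κ → ℝ)}
    (hb : b ∈ perspRelaxation h ℓ e K Δ) (hw : ∀ i, 0 < b.2.2 (e i)) :
    b ∈ convexHull ℝ (mixedBinarySet h ℓ e K Δ) := by
  rw [← perspLift_self fun i => (hw i).ne']
  refine convexHull_mono (image_subset_iff.2 fun z hz => ?_)
    ((perspLift e b).image_convexHull Δ ▸ mem_image_of_mem _ hb.2.2)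
  exact perspLift_mem_mixedBinarySet h0 hK0 hKcone hΔ hb hw hz

lemma perspShift_mem_perspRelaxation (hh : ∀ i, IsProperClosedConvex (h i)) (h0 : ∀ i, h i 0 = 0)
    (hKcone : ∀ i, ∀ x ∈ K i, ∀ t : ℝ, 0 < t → t • x ∈ K i)
    {b : (∀ i, E i) × (ι → ℝ) × (κ → ℝ)} (hb : b ∈ perspRelaxation h ℓ e K Δ)
    {δ' : κ → ℝ} (hδ' : δ' ∈ convexHull ℝ Δ) (hδ'pos : ∀ i, 0 < δ' (e i))
    {ε : ℝ} (hε : ε ∈ Ioo 0 1) :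
    perspShift e b δ' ε ∈ perspRelaxation h ℓ e K Δ ∧
      ∀ i, 0 < (perspShift e b δ' ε).2.2 (e i) := by
  obtain ⟨hepi, hK, hΔb⟩ := hb
  obtain ⟨hε0, hε1⟩ := hε
  set t := fun i => 1 - ε + ε * (δ' (e i) / b.2.2 (e i))
  have hw : ∀ i, 0 ≤ b.2.2 (e i) := fun i => ((perspCl_le_coe_iff (hh i) (h0 i)).1 (hepi i)).1
  have ht : ∀ i, 0 < t i := fun i => by
    have := div_nonneg (hδ'pos i).le (hw i)
    simp only [t]
    nlinarith
  have htw : ∀ i, t i * b.2.2 (e i) ≤ (1 - ε) * b.2.2 (e i) + ε * δ' (e i) := fun i => by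
    rcases eq_or_ne (b.2.2 (e i)) 0 with hwi | hwi
    · simpa [t, hwi] using mul_nonneg hε0.le (hδ'pos i).le
    · simp only [t, add_mul, mul_assoc, div_mul_cancel₀ _ hwi, le_refl]
  refine ⟨⟨fun i => ?_, fun i => hKcone i _ (hK i) _ (ht i),
    convex_convexHull ℝ Δ hΔb hδ' (by linarith) hε0.le (by ring)⟩, fun i => ?_⟩
  · show perspCl (h i) (ℓ i (t i • b.1 i)) ((1 - ε) * b.2.2 (e i) + ε * δ' (e i)) ≤
      ((t i * b.2.1 i : ℝ) : EReal)
    rw [map_smul, smul_eq_mul]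
    exact perspCl_mul_le (hh i) (h0 i) (hepi i) (ht i) (htw i)
  · have := mul_nonneg (sub_nonneg.2 hε1.le) (hw i)
    simp only [perspShift, Pi.add_apply, Pi.smul_apply, smul_eq_mul]
    nlinarith [hδ'pos i]

lemma perspRelaxation_subset_closure_convexHull [Fintype ι] [∀ i, ContinuousSMul ℝ (E i)]
    (hh : ∀ i, IsProperClosedConvex (h i)) (h0 : ∀ i, h i 0 = 0) (hK0 : ∀ i, 0 ∈ K i)
    (hKcone : ∀ i, ∀ x ∈ K i, ∀ t : ℝ, 0 < t → t • x ∈ K i)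
    (hΔ : ∀ δ ∈ Δ, ∀ j, δ j = 0 ∨ δ j = 1) (hΔ1 : ∀ i, ∃ δ ∈ Δ, δ (e i) = 1) :
    perspRelaxation h ℓ e K Δ ⊆ closure (convexHull ℝ (mixedBinarySet h ℓ e K Δ)) := by
  intro b hb
  obtain ⟨δ', hδ', hδ'pos⟩ := exists_forall_pos_mem_convexHull
    (fun δ hδ j => (hΔ δ hδ j).elim (·.ge) (·.symm ▸ zero_le_one)) ⟨_, hb.2.2⟩ e
    fun i => by
      obtain ⟨δ, hδ, h1⟩ := hΔ1 i
      exact ⟨δ, hδ, h1 ▸ one_pos⟩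
  refine mem_closure_of_tendsto
    ((tendsto_perspShift e b δ').mono_left (nhdsWithin_le_nhds (s := Ioi 0))) ?_
  filter_upwards [Ioo_mem_nhdsGT one_pos] with ε hε
  obtain ⟨hmem, hpos⟩ := perspShift_mem_perspRelaxation hh h0 hKcone hb hδ' hδ'pos hε
  exact mem_convexHull_mixedBinarySet_of_pos h0 hK0 hKcone hΔ hmem hpos

end MixedBinary

theorem closure_convexHull_W_general {n p : ℕ} (hpn : p ≤ n)
    (q r : Fin p → ℕ) (hq : ∀ i, 0 < q i)
    (h : Fin p → ℝ → EReal)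
    (hbot : ∀ i, ∀ x : ℝ, h i x ≠ ⊥) (hnetop : ∀ i, ∃ x : ℝ, h i x ≠ ⊤)
    (hlsc : ∀ i, LowerSemicontinuous (h i))
    (hconv : ∀ i, Convex ℝ {u : ℝ × ℝ | h i u.2 ≤ (u.1 : EReal)})
    (h0 : ∀ i, h i 0 = 0)
    (C : ∀ i : Fin p, (Fin (q i) → ℝ) →ₗ[ℝ] (Fin (r i) → ℝ))
    (CC : ∀ i : Fin p, Set (Fin (r i) → ℝ))
    (hCCconv : ∀ i, Convex ℝ (CC i)) (hCCcl : ∀ i, IsClosed (CC i))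
    (hCC0 : ∀ i, (0 : Fin (r i) → ℝ) ∈ CC i)
    (hCCcone : ∀ i, ∀ c ∈ CC i, ∀ lam : ℝ, 0 < lam → lam • c ∈ CC i)
    (Δ : Set (Fin n → ℝ))
    (hΔ : ∀ δ ∈ Δ, ∀ j : Fin n, δ j = 0 ∨ δ j = 1)
    (hΔ1 : ∀ i : Fin p, ∃ δ ∈ Δ, δ (Fin.castLE hpn i) = 1) :
    closure (convexHull ℝ
      {b : (∀ i : Fin p, Fin (q i) → ℝ) × (Fin p → ℝ) × (Fin n → ℝ) |
        (∀ i : Fin p, h i (b.1 i ⟨0, hq i⟩) ≤ (b.2.1 i : EReal)) ∧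
        (∀ i : Fin p, b.1 i ⟨0, hq i⟩ * (1 - b.2.2 (Fin.castLE hpn i)) = 0) ∧
        (∀ i : Fin p, C i (b.1 i) ∈ CC i) ∧
        b.2.2 ∈ Δ})
      = {b : (∀ i : Fin p, Fin (q i) → ℝ) × (Fin p → ℝ) × (Fin n → ℝ) |
        (∀ i : Fin p, perspCl (h i) (b.1 i ⟨0, hq i⟩) (b.2.2 (Fin.castLE hpn i)) ≤ (b.2.1 i : EReal)) ∧
        (∀ i : Fin p, C i (b.1 i) ∈ CC i) ∧
        b.2.2 ∈ convexHull ℝ Δ} := by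
  have hh : ∀ i, IsProperClosedConvex (h i) := fun i => ⟨hbot i, hnetop i, hlsc i, hconv i⟩
  let ℓ : ∀ i, (Fin (q i) → ℝ) →L[ℝ] ℝ := fun i => ContinuousLinearMap.proj ⟨0, hq i⟩
  let K : ∀ i, Set (Fin (q i) → ℝ) := fun i => C i ⁻¹' CC i
  change closure (convexHull ℝ (mixedBinarySet h ℓ (Fin.castLE hpn) K Δ)) =
    perspRelaxation h ℓ (Fin.castLE hpn) K Δ
  refine Subset.antisymm ?_ ?_
  · refine closure_minimal (convexHull_min (mixedBinarySet_subset_perspRelaxation hh h0 hΔ)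
      (convex_perspRelaxation hh h0 fun i => (hCCconv i).linear_preimage (C i))) ?_
    exact isClosed_perspRelaxation hh h0
      (fun i => (hCCcl i).preimage (C i).continuous_of_finiteDimensional) hΔ
  · refine perspRelaxation_subset_closure_convexHull hh h0 (fun i => by simp [K, hCC0 i])
      (fun i x hx t ht => ?_) hΔ hΔ1
    simpa [K] using hCCcone i _ hx t ht

/-- Closed convex hull of the mixed-binary set `W` (Proposition on `W`):
if for every `i ∈ [p]` there is `δ ∈ Δ` with `δ_i = 1`, then
`cl conv(W)` is described by the perspective closures `h_i^π`. -/
theorem closure_convexHull_W {n p : ℕ} (hp : 0 < p) (hpn : p ≤ n)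
    (q r : Fin p → ℕ) (hq : ∀ i, 0 < q i)
    (h : Fin p → ℝ → EReal)
    (hbot : ∀ i, ∀ x : ℝ, h i x ≠ ⊥) (hnetop : ∀ i, ∃ x : ℝ, h i x ≠ ⊤)
    (hlsc : ∀ i, LowerSemicontinuous (h i))
    (hconv : ∀ i, Convex ℝ {u : ℝ × ℝ | h i u.2 ≤ (u.1 : EReal)})
    (h0 : ∀ i, h i 0 = 0)
    (C : ∀ i : Fin p, (Fin (q i) → ℝ) →ₗ[ℝ] (Fin (r i) → ℝ))
    (CC : ∀ i : Fin p, Set (Fin (r i) → ℝ))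
    (hCCconv : ∀ i, Convex ℝ (CC i)) (hCCcl : ∀ i, IsClosed (CC i))
    (hCC0 : ∀ i, (0 : Fin (r i) → ℝ) ∈ CC i)
    (hCCcone : ∀ i, ∀ c ∈ CC i, ∀ lam : ℝ, 0 < lam → lam • c ∈ CC i)
    (Δ : Set (Fin n → ℝ))
    (hΔ : ∀ δ ∈ Δ, ∀ j : Fin n, δ j = 0 ∨ δ j = 1)
    (hΔ1 : ∀ i : Fin p, ∃ δ ∈ Δ, δ (Fin.castLE hpn i) = 1) :
    closure (convexHull ℝ
      {b : (∀ i : Fin p, Fin (q i) → ℝ) × (Fin p → ℝ) × (Fin n → ℝ) |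
        (∀ i : Fin p, h i (b.1 i ⟨0, hq i⟩) ≤ (b.2.1 i : EReal)) ∧
        (∀ i : Fin p, b.1 i ⟨0, hq i⟩ * (1 - b.2.2 (Fin.castLE hpn i)) = 0) ∧
        (∀ i : Fin p, C i (b.1 i) ∈ CC i) ∧
        b.2.2 ∈ Δ})
      = {b : (∀ i : Fin p, Fin (q i) → ℝ) × (Fin p → ℝ) × (Fin n → ℝ) |
        (∀ i : Fin p, perspCl (h i) (b.1 i ⟨0, hq i⟩) (b.2.2 (Fin.castLE hpn i)) ≤ (b.2.1 i : EReal)) ∧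
        (∀ i : Fin p, C i (b.1 i) ∈ CC i) ∧
        b.2.2 ∈ convexHull ℝ Δ} :=
  closure_convexHull_W_general hpn q r hq h hbot hnetop hlsc hconv h0 C CC hCCconv hCCcl hCC0
    hCCcone Δ hΔ hΔ1
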